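/- arXiv:2209.10613 — 2 statements merged into one kernel-verified Lean document; each statement's English description precedes it below -/
import Mathlib

section
/- Let X be a skew-symmetric 7×7 real matrix. If rank X = 2, then X is not of type Λ²₇ and X is not of type Λ²₁₄. If rank X = 4, then X is not of type Λ²₇. -/
/-!
A nonzero `u ⌟ φ` has rank at least 6, because `(u ⌟ φ)² = u uᵀ - ‖u‖² I`.

A skew matrix `X` of rank less than 4 has all its `4 × 4` Pfaffians equal to zero, which says
that `X i j • X = a ∧ b` for the columns `a`, `b` of `X` with indices `i`, `j`. Contracting `a ∧ b`
with `φ` gives `2 (a × b)`, and `‖a × b‖² = ‖a‖² ‖b‖² - ⟪a, b⟫²` is half the squared norm of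
`a ∧ b`. So if `X` is of type `Λ²₁₄`, then `a × b = 0`, hence `a ∧ b = 0`; as the `(i, j)` entry
of `a ∧ b` is `X i j ^ 2`, this forces `X = 0`.
-/

open scoped BigOperators RealInnerProductSpace Matrix

noncomputable section

/-- Euclidean 7-space. -/
abbrev E7 := EuclideanSpace ℝ (Fin 7)

/-- Kronecker delta. -/
def kd (i j : Fin 7) : ℝ := if i = j then 1 else 0

/-- The totally antisymmetric 3-array with value 1 at `(a,b,c)` (for distinct `a,b,c`). -/
def tripleForm (a b c i j k : Fin 7) : ℝ :=
  kd i a * (kd j b * kd k c - kd j c * kd k b)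
  - kd i b * (kd j a * kd k c - kd j c * kd k a)
  + kd i c * (kd j a * kd k b - kd j b * kd k a)

/-- The G₂ 3-form `φ` on `ℝ⁷` (indices 0-based: φ₁₂₃ = φ(0,1,2) etc.). -/
def phi7 (i j k : Fin 7) : ℝ :=
  tripleForm 0 1 2 i j k + tripleForm 0 3 4 i j k + tripleForm 1 3 5 i j k
  + tripleForm 2 3 6 i j k + tripleForm 1 4 6 i j k
  - tripleForm 2 4 5 i j k - tripleForm 0 5 6 i j k

/-- The totally antisymmetric 4-array with value 1 at `(a,b,c,d)` (for distinct `a,b,c,d`). -/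
def quadForm (a b c d i j k l : Fin 7) : ℝ :=
  Matrix.det !![kd i a, kd i b, kd i c, kd i d;
                kd j a, kd j b, kd j c, kd j d;
                kd k a, kd k b, kd k c, kd k d;
                kd l a, kd l b, kd l c, kd l d]

/-- The 4-form `ψ = ⋆φ` on `ℝ⁷` (indices 0-based). -/
def psi7 (i j k l : Fin 7) : ℝ :=
  quadForm 3 4 5 6 i j k l + quadForm 0 2 3 5 i j k l + quadForm 1 2 5 6 i j k l
  + quadForm 0 2 4 6 i j k l + quadForm 0 1 4 5 i j k l
  - quadForm 1 2 3 4 i j k l - quadForm 0 1 3 6 i j k l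

/-- The cross product on `ℝ⁷`: `(u × v)_k = Σ_{p,q} u_p v_q φ(p,q,k)`. -/
def crossE (u v : E7) : E7 := WithLp.toLp 2 (fun k => ∑ p, ∑ q, u p * v q * phi7 p q k)

/-- The matrix `u ⌟ φ`, with entries `(u ⌟ φ)(i,j) = Σ_p u_p φ(p,i,j)`. -/
def contractPhi (u : E7) : Matrix (Fin 7) (Fin 7) ℝ :=
  Matrix.of fun i j => ∑ p, u p * phi7 p i j

/-- The matrix `u ∧ v`, with entries `u_i v_j - u_j v_i`. -/
def wedgeM (u v : E7) : Matrix (Fin 7) (Fin 7) ℝ :=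
  Matrix.of fun i j => u i * v j - u j * v i

/-- The matrix `Ψ_{uv}`, with entries `Σ_{p,q} u_p v_q ψ(p,q,i,j)`. -/
def PsiM (u v : E7) : Matrix (Fin 7) (Fin 7) ℝ :=
  Matrix.of fun i j => ∑ p, ∑ q, u p * v q * psi7 p q i j

/-- Evaluation of a matrix as a bilinear form: `X(u,v) = Σ_{i,j} u_i v_j X(i,j)`. -/
def Xform (X : Matrix (Fin 7) (Fin 7) ℝ) (u v : E7) : ℝ := ∑ i, ∑ j, u i * v j * X i j

/-- `X.mulVec v` as a map `E7 → E7`. -/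
def mulVecE (X : Matrix (Fin 7) (Fin 7) ℝ) (v : E7) : E7 := WithLp.toLp 2 (fun i => ∑ j, X i j * v j)

/-- A skew-symmetric matrix is of type `Λ²₁₄` (i.e. lies in 𝔤₂). -/
def IsType14 (X : Matrix (Fin 7) (Fin 7) ℝ) : Prop :=
  ∀ i j k : Fin 7, ∑ p, (X i p * phi7 p j k + X j p * phi7 i p k + X k p * phi7 i j p) = 0

/-- A G₂-adapted frame: an orthonormal basis `e₁,…,e₇` with
`e₃ = e₁ × e₂`, `e₅ = e₁ × e₄`, `e₆ = e₂ × e₄`, `e₇ = e₃ × e₄` (0-based indices). -/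
def IsG2Frame (e : Fin 7 → E7) : Prop :=
  Orthonormal ℝ e ∧ e 2 = crossE (e 0) (e 1) ∧ e 4 = crossE (e 0) (e 3)
  ∧ e 5 = crossE (e 1) (e 3) ∧ e 6 = crossE (e 2) (e 3)

/-- An associative 3-plane: a 3-dimensional subspace closed under the cross product. -/
def IsAssociative (P : Submodule ℝ E7) : Prop :=
  Module.finrank ℝ P = 3 ∧ ∀ u ∈ P, ∀ v ∈ P, crossE u v ∈ P

namespace Matrix

variable {K m n : Type*} [Field K] [Fintype n]

theorem rank_add_le (A B : Matrix m n K) : (A + B).rank ≤ A.rank + B.rank := by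
  rw [rank, rank, rank, mulVecLin_add]
  refine (Submodule.finrank_mono ?_).trans (Submodule.finrank_add_le_finrank_add_finrank _ _)
  rintro x ⟨y, rfl⟩
  exact Submodule.mem_sup.2 ⟨_, ⟨y, rfl⟩, _, ⟨y, rfl⟩, rfl⟩

theorem det_skew_fin_four {R : Type*} [CommRing R] (p q r s t w : R) :
    !![0, p, q, r; -p, 0, s, t; -q, -s, 0, w; -r, -t, -w, 0].det = (p * w - q * t + r * s) ^ 2 := by
  simp [det_succ_row_zero, Fin.sum_univ_succ, Fin.succAbove]
  ring

variable [CharZero K] {X : Matrix n n K}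

theorem apply_mul_apply_eq_of_rank_lt_four (hskew : Xᵀ = -X) (hX : X.rank < 4) (i j l m : n) :
    X i j * X l m = X l i * X m j - X m i * X l j := by
  have hs : ∀ a b, X b a = -X a b := fun a b => by simpa using congrFun (congrFun hskew a) b
  have hd : ∀ a, X a a = 0 := fun a => CharZero.eq_neg_self_iff.mp (hs a a)
  have hsub : X.submatrix ![i, j, l, m] ![i, j, l, m] =
      !![0, X i j, X i l, X i m; -X i j, 0, X j l, X j m;
        -X i l, -X j l, 0, X l m; -X i m, -X j m, -X l m, 0] := by
    ext a b
    fin_cases a <;> fin_cases b <;> simp [hd, hs i j, hs i l, hs i m, hs j l, hs j m, hs l m]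
  have hdet : (X.submatrix ![i, j, l, m] ![i, j, l, m]).det = 0 := by
    by_contra h
    have := (rank_of_det_ne_zero h).symm.trans_le (rank_submatrix_le X _ _)
    rw [Fintype.card_fin] at this
    omega
  rw [hsub, det_skew_fin_four, sq_eq_zero_iff] at hdet
  rw [hs i l, hs j m, hs j l, hs i m]
  linear_combination hdet

end Matrix

theorem EuclideanSpace.sum_sq_mul_sub_mul {ι : Type*} [Fintype ι] (a b : EuclideanSpace ℝ ι) :
    ∑ i, ∑ j, (a i * b j - a j * b i) ^ 2 = 2 * (‖a‖ ^ 2 * ‖b‖ ^ 2 - ⟪a, b⟫ ^ 2) := by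
  have hnorm : ‖a‖ ^ 2 * ‖b‖ ^ 2 = ∑ i, ∑ j, a i ^ 2 * b j ^ 2 := by
    simp [EuclideanSpace.norm_sq_eq, Finset.sum_mul_sum]
  have hinner : ⟪a, b⟫ ^ 2 = ∑ i, ∑ j, (a i * b i) * (a j * b j) := by
    simp [EuclideanSpace.inner_eq_star_dotProduct, dotProduct, sq, Finset.sum_mul_sum, mul_comm]
  have hswap : ∑ i, ∑ j, a j ^ 2 * b i ^ 2 = ∑ i, ∑ j, a i ^ 2 * b j ^ 2 := Finset.sum_comm
  have hexpand : ∑ i, ∑ j, (a i * b j - a j * b i) ^ 2 = ∑ i, ∑ j, a i ^ 2 * b j ^ 2 +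
      ∑ i, ∑ j, a j ^ 2 * b i ^ 2 - 2 * ∑ i, ∑ j, (a i * b i) * (a j * b j) := by
    simp only [Finset.mul_sum, ← Finset.sum_add_distrib, ← Finset.sum_sub_distrib]
    exact Finset.sum_congr rfl fun i _ => Finset.sum_congr rfl fun j _ => by ring
  rw [hexpand, hswap, hnorm, hinner]
  ring

lemma phi7_swap (i j k : Fin 7) : phi7 i k j = -phi7 i j k := by
  simp only [phi7, tripleForm]; ring

lemma phi7_cycle (i j k : Fin 7) : phi7 j k i = phi7 i j k := by
  simp only [phi7, tripleForm]; ring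

lemma contractPhi_eq (u : E7) : contractPhi u =
    !![0, u 2, -u 1, u 4, -u 3, -u 6, u 5;
      -u 2, 0, u 0, u 5, u 6, -u 3, -u 4;
      u 1, -u 0, 0, u 6, -u 5, u 4, -u 3;
      -u 4, -u 5, -u 6, 0, u 0, u 1, u 2;
      u 3, -u 6, u 5, -u 0, 0, -u 2, u 1;
      u 6, u 3, -u 4, -u 1, u 2, 0, -u 0;
      -u 5, u 4, u 3, -u 2, -u 1, u 0, 0] := by
  ext i j
  simp only [contractPhi, Matrix.of_apply, phi7, tripleForm, kd, mul_add, mul_sub,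
    Finset.sum_add_distrib, Finset.sum_sub_distrib, mul_ite, mul_one, mul_zero]
  fin_cases i <;> fin_cases j <;> simp

lemma transpose_contractPhi (u : E7) : (contractPhi u)ᵀ = -contractPhi u := by
  ext i j
  simp [contractPhi, phi7_swap _ i j]

lemma contractPhi_mul_self (u : E7) :
    contractPhi u * contractPhi u = Matrix.vecMulVec u.ofLp u.ofLp - ‖u‖ ^ 2 • 1 := by
  rw [contractPhi_eq, EuclideanSpace.norm_sq_eq]
  ext i j
  simp only [Matrix.mul_apply, Fin.sum_univ_seven, Matrix.sub_apply, Matrix.vecMulVec_apply,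
    Matrix.smul_apply, Matrix.one_apply, smul_eq_mul, Real.norm_eq_abs, sq_abs]
  fin_cases i <;> fin_cases j <;>
    simp only [Fin.isValue, Fin.zero_eta, Fin.mk_one, Fin.reduceFinMk, Matrix.of_apply,
      Matrix.cons_val', Matrix.cons_val_fin_one, Matrix.cons_val, Matrix.cons_val_zero,
      Matrix.cons_val_one, Fin.reduceEq, ↓reduceIte] <;> ring

lemma crossE_ofLp (a b : E7) : (crossE a b).ofLp = -(contractPhi a *ᵥ b.ofLp) := by
  ext k
  simp only [crossE, contractPhi, Matrix.mulVec, dotProduct, Matrix.of_apply, Pi.neg_apply,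
    Finset.sum_mul, ← Finset.sum_neg_distrib]
  rw [Finset.sum_comm]
  refine Finset.sum_congr rfl fun q _ => Finset.sum_congr rfl fun p _ => ?_
  rw [phi7_swap]; ring

lemma norm_crossE_sq (a b : E7) : ‖crossE a b‖ ^ 2 = ‖a‖ ^ 2 * ‖b‖ ^ 2 - ⟪a, b⟫ ^ 2 := by
  set A := contractPhi a
  have hnorm : ‖crossE a b‖ ^ 2 = (A *ᵥ b.ofLp) ⬝ᵥ (A *ᵥ b.ofLp) := by
    rw [EuclideanSpace.norm_sq_eq]
    simp [crossE_ofLp, dotProduct, sq, A]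
  have hskew : (A *ᵥ b.ofLp) ⬝ᵥ (A *ᵥ b.ofLp) = -(b.ofLp ⬝ᵥ ((A * A) *ᵥ b.ofLp)) := by
    rw [Matrix.dotProduct_mulVec, ← Matrix.mulVec_transpose, transpose_contractPhi,
      Matrix.neg_mulVec, Matrix.mulVec_mulVec, neg_dotProduct, dotProduct_comm]
  have hself : ∀ v : E7, v.ofLp ⬝ᵥ v.ofLp = ‖v‖ ^ 2 := fun v => by
    rw [← real_inner_self_eq_norm_sq, EuclideanSpace.inner_eq_star_dotProduct, star_trivial]
  rw [hnorm, hskew, contractPhi_mul_self, Matrix.sub_mulVec, Matrix.vecMulVec_mulVec,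
    Matrix.smul_mulVec, Matrix.one_mulVec, dotProduct_sub, dotProduct_smul, dotProduct_smul, hself,
    EuclideanSpace.inner_eq_star_dotProduct, star_trivial, op_smul_eq_mul, smul_eq_mul,
    dotProduct_comm a.ofLp]
  ring

lemma rank_contractPhi_eq_zero_or_six_le (u : E7) :
    (contractPhi u).rank = 0 ∨ 6 ≤ (contractPhi u).rank := by
  rcases eq_or_ne u 0 with rfl | hu
  · left
    rw [show contractPhi 0 = 0 by ext; simp [contractPhi], Matrix.rank_zero]
  right
  have hdet : (‖u‖ ^ 2 • (1 : Matrix (Fin 7) (Fin 7) ℝ)).det ≠ 0 := by simp [hu]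
  have hsum : ‖u‖ ^ 2 • (1 : Matrix (Fin 7) (Fin 7) ℝ) =
      Matrix.vecMulVec u.ofLp u.ofLp + -contractPhi u * contractPhi u := by
    rw [neg_mul, contractPhi_mul_self]; abel
  have h7 := Matrix.rank_of_det_ne_zero hdet
  rw [hsum, Fintype.card_fin] at h7
  have := (Matrix.rank_add_le _ _).trans (add_le_add (Matrix.rank_vecMulVec_le u.ofLp u.ofLp)
    (Matrix.rank_mul_le_right (-contractPhi u) (contractPhi u)))
  omega

lemma sum_phi7_mul_wedgeM (a b : E7) (k : Fin 7) :
    ∑ i, ∑ j, phi7 k i j * wedgeM a b i j = 2 * crossE a b k := by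
  have hswap : ∑ i, ∑ j, phi7 k i j * (a j * b i) = -∑ i, ∑ j, phi7 k i j * (a i * b j) := by
    rw [Finset.sum_comm (f := fun (i j : Fin 7) => phi7 k i j * (a j * b i))]
    simp only [← Finset.sum_neg_distrib]
    refine Finset.sum_congr rfl fun i _ => Finset.sum_congr rfl fun j _ => ?_
    rw [phi7_swap]; ring
  simp only [wedgeM, Matrix.of_apply, mul_sub, Finset.sum_sub_distrib, hswap, sub_neg_eq_add, ← two_mul,
    crossE, Finset.mul_sum]
  refine Finset.sum_congr rfl fun i _ => Finset.sum_congr rfl fun j _ => ?_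
  rw [phi7_cycle k i j]; ring

lemma sum_phi7_mul_eq_sum_contractPhi (X : Matrix (Fin 7) (Fin 7) ℝ) (k : Fin 7) :
    ∑ a, ∑ b, phi7 k a b * X a b = ∑ a, contractPhi (WithLp.toLp 2 (X a)) k a := by
  simp only [contractPhi, Matrix.of_apply]
  refine Finset.sum_congr rfl fun a _ => Finset.sum_congr rfl fun b _ => ?_
  rw [phi7_cycle b k a, mul_comm]

lemma sum_isType14_eq_contractPhi (X : Matrix (Fin 7) (Fin 7) ℝ) (i j l : Fin 7) :
    ∑ p, (X i p * phi7 p j l + X j p * phi7 i p l + X l p * phi7 i j p) =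
      contractPhi (WithLp.toLp 2 (X i)) j l + contractPhi (WithLp.toLp 2 (X j)) l i +
        contractPhi (WithLp.toLp 2 (X l)) i j := by
  simp only [contractPhi, Matrix.of_apply, Finset.sum_add_distrib, ← phi7_cycle i _ l,
    phi7_cycle _ i j]

lemma exists_sum_phi7_mul_eq {X : Matrix (Fin 7) (Fin 7) ℝ} (hskew : Xᵀ = -X) (k : Fin 7) :
    ∃ i j l, ∑ a, ∑ b, phi7 k a b * X a b =
      2 * ∑ p, (X i p * phi7 p j l + X j p * phi7 i p l + X l p * phi7 i j p) := by
  -- the side condition `a < b` keeps `simp` from looping on this rule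
  have hs : ∀ a b, a < b → X b a = -X a b := fun a b _ => by
    simpa using congrFun (congrFun hskew a) b
  simp only [sum_phi7_mul_eq_sum_contractPhi, sum_isType14_eq_contractPhi, contractPhi_eq]
  -- `{k, i, j, l}` is one of the seven index sets that support `ψ = ⋆φ`
  fin_cases k <;>
  [refine ⟨1, 3, 6, ?_⟩; refine ⟨0, 4, 5, ?_⟩; refine ⟨0, 3, 5, ?_⟩; refine ⟨0, 1, 6, ?_⟩;
    refine ⟨0, 5, 1, ?_⟩; refine ⟨0, 1, 4, ?_⟩; refine ⟨0, 2, 4, ?_⟩] <;>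
  · simp only [Fin.isValue, Fin.zero_eta, Fin.mk_one, Fin.reduceFinMk, Matrix.of_apply,
      Matrix.cons_val', Matrix.cons_val_fin_one, Matrix.cons_val, Matrix.cons_val_zero,
      Matrix.cons_val_one, Fin.sum_univ_seven, hs, Fin.reduceLT, zero_lt_one]
    ring

lemma IsType14.sum_phi7_mul_eq_zero {X : Matrix (Fin 7) (Fin 7) ℝ} (hskew : Xᵀ = -X)
    (h : IsType14 X) (k : Fin 7) : ∑ i, ∑ j, phi7 k i j * X i j = 0 := by
  obtain ⟨i, j, l, hk⟩ := exists_sum_phi7_mul_eq hskew k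
  rw [hk, h i j l, mul_zero]

lemma IsType14.eq_zero_of_rank_lt_four {X : Matrix (Fin 7) (Fin 7) ℝ} (hskew : Xᵀ = -X)
    (h : IsType14 X) (hX : X.rank < 4) : X = 0 := by
  ext i j
  rw [Matrix.zero_apply]
  by_contra hij
  set a : E7 := WithLp.toLp 2 fun l => X l i
  set b : E7 := WithLp.toLp 2 fun l => X l j
  have hwedge : ∀ l m, wedgeM a b l m = X i j * X l m := fun l m =>
    (Matrix.apply_mul_apply_eq_of_rank_lt_four hskew hX i j l m).symm
  have hcross : crossE a b = 0 := by
    ext k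
    have := sum_phi7_mul_wedgeM a b k
    simp only [hwedge, mul_left_comm _ (X i j), ← Finset.mul_sum, h.sum_phi7_mul_eq_zero hskew k] at this
    simpa using this.symm
  have hsum := EuclideanSpace.sum_sq_mul_sub_mul a b
  rw [← norm_crossE_sq, hcross, norm_zero, zero_pow two_ne_zero, mul_zero] at hsum
  have hrow := (Finset.sum_eq_zero_iff_of_nonneg fun l _ => Finset.sum_nonneg fun m _ =>
    sq_nonneg _).1 hsum i (Finset.mem_univ _)
  have hentry := (Finset.sum_eq_zero_iff_of_nonneg fun m _ => sq_nonneg _).1 hrow j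
    (Finset.mem_univ _)
  rw [sq_eq_zero_iff] at hentry
  exact hij (mul_self_eq_zero.1 ((hwedge i j).symm.trans hentry))

/-- A rank-2 skew matrix is neither purely type `Λ²₇` nor `Λ²₁₄`;
a rank-4 one is not purely type `Λ²₇`. -/
theorem stmt6 (X : Matrix (Fin 7) (Fin 7) ℝ) (hskew : Xᵀ = -X) :
    (X.rank = 2 → (¬ ∃ u : E7, X = contractPhi u) ∧ ¬ IsType14 X) ∧
    (X.rank = 4 → ¬ ∃ u : E7, X = contractPhi u) := by
  refine ⟨fun h2 => ⟨?_, fun h14 => ?_⟩, fun h4 => ?_⟩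
  · rintro ⟨u, rfl⟩
    rcases rank_contractPhi_eq_zero_or_six_le u with h | h <;> omega
  · have hX := h14.eq_zero_of_rank_lt_four hskew (by omega)
    simp [hX] at h2
  · rintro ⟨u, rfl⟩
    rcases rank_contractPhi_eq_zero_or_six_le u with h | h <;> omega

end
end

section
/- Let P and Q be distinct associative 3-planes, and for an associative 3-plane R let Θ(R) be the linear span in Matrix (Fin 7) (Fin 7) ℝ of { a ∧ b : a, b ∈ R } ∪ { Ψ_{ab} : a, b ∈ R }. Then Θ(P) ∩ Θ(Q) = { u ⌟ φ : u ∈ P ∩ Q }. In particular, if P ∩ Q = {0} then Θ(P) ∩ Θ(Q) = {0}, and if P ∩ Q is one-dimensional spanned by a vector v then Θ(P) ∩ Θ(Q) is the one-dimensional span of v ⌟ φ. -/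
/-!
The identity `(a × b) ⌟ φ = a ∧ b - Ψ_{ab}` shows that for an associative `R`, `Θ(R)` is the sum of
`Λ²R` (the span of the `a ∧ b`, `a, b ∈ R`) and `R ⌟ φ`; the latter lies in `Θ(R)` because every
`u ∈ R` is `|b|⁻² b × (u × b)` for a nonzero `b ∈ R` orthogonal to `u`.

If `W + u ⌟ φ = W' + u' ⌟ φ` with `W ∈ Λ²P`, `W' ∈ Λ²Q`, `u ∈ P`, `u' ∈ Q`, then `(u - u') ⌟ φ = W' - W`
maps `ℝ⁷` into `P + Q`, i.e. `(u - u') × x ∈ P + Q` for all `x`. As `d × (x × d) = |d|² x - ⟨d, x⟩ d`,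
a nonzero `d = u - u'` would force `P + Q = ℝ⁷`, which is impossible since `dim P + dim Q = 6`.
So `u = u' ∈ P ∩ Q`, and `W = W'` is a skew matrix with image in `P ∩ Q`. That intersection has
dimension at most one, because a cross-closed subspace of dimension at least two contains a
nonzero orthogonal triple `a, b, a × b`; hence `W = 0`.
-/

open scoped BigOperators RealInnerProductSpace Matrix

noncomputable section

/-- The subspace `Θ(R)` spanned by all `a ∧ b` and `Ψ_{ab}` for `a, b ∈ R`. -/
def Theta (R : Submodule ℝ E7) : Submodule ℝ (Matrix (Fin 7) (Fin 7) ℝ) :=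
  Submodule.span ℝ
    {M : Matrix (Fin 7) (Fin 7) ℝ | ∃ a ∈ R, ∃ b ∈ R, M = wedgeM a b ∨ M = PsiM a b}

lemma real_inner_eq_sum (u v : E7) : ⟪u, v⟫ = ∑ i, u i * v i := by
  simp [PiLp.inner_apply, mul_comm]

lemma crossE_eq (u v : E7) : crossE u v = WithLp.toLp 2 ![
    u 1 * v 2 - u 2 * v 1 + u 3 * v 4 - u 4 * v 3 - u 5 * v 6 + u 6 * v 5,
    u 2 * v 0 - u 0 * v 2 + u 3 * v 5 - u 5 * v 3 + u 4 * v 6 - u 6 * v 4,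
    u 0 * v 1 - u 1 * v 0 + u 3 * v 6 - u 6 * v 3 - u 4 * v 5 + u 5 * v 4,
    u 4 * v 0 - u 0 * v 4 + u 5 * v 1 - u 1 * v 5 + u 6 * v 2 - u 2 * v 6,
    u 0 * v 3 - u 3 * v 0 + u 6 * v 1 - u 1 * v 6 - u 5 * v 2 + u 2 * v 5,
    u 1 * v 3 - u 3 * v 1 - u 2 * v 4 + u 4 * v 2 - u 6 * v 0 + u 0 * v 6,
    u 2 * v 3 - u 3 * v 2 + u 1 * v 4 - u 4 * v 1 - u 0 * v 5 + u 5 * v 0] := by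
  ext k
  fin_cases k <;>
  · simp [crossE, Fin.sum_univ_seven, phi7, tripleForm, kd]
    ring

lemma crossE_zero_right (u : E7) : crossE u 0 = 0 := by
  ext k
  simp [crossE]

lemma crossE_crossE_self (u v : E7) :
    crossE u (crossE v u) = ⟪u, u⟫ • v - ⟪u, v⟫ • u := by
  rw [real_inner_eq_sum, real_inner_eq_sum, crossE_eq v u, crossE_eq]
  ext k
  fin_cases k <;>
  · simp [Fin.sum_univ_seven]
    ring

lemma inner_crossE_self_left (u v : E7) : ⟪crossE u v, u⟫ = 0 := by
  simp [real_inner_eq_sum, crossE_eq, Fin.sum_univ_seven]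
  ring

lemma inner_crossE_self_right (u v : E7) : ⟪crossE u v, v⟫ = 0 := by
  simp [real_inner_eq_sum, crossE_eq, Fin.sum_univ_seven]
  ring

lemma mulVecE_contractPhi (w x : E7) : mulVecE (contractPhi w) x = -crossE w x := by
  rw [crossE_eq]
  ext i
  fin_cases i <;>
  · simp [mulVecE, contractPhi, Fin.sum_univ_seven, phi7, tripleForm, kd]
    ring

lemma quadForm_eq (a b c d i j k l : Fin 7) : quadForm a b c d i j k l =
    kd i a * (kd j b * (kd k c * kd l d - kd k d * kd l c)
      - kd j c * (kd k b * kd l d - kd k d * kd l b)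
      + kd j d * (kd k b * kd l c - kd k c * kd l b))
  - kd i b * (kd j a * (kd k c * kd l d - kd k d * kd l c)
      - kd j c * (kd k a * kd l d - kd k d * kd l a)
      + kd j d * (kd k a * kd l c - kd k c * kd l a))
  + kd i c * (kd j a * (kd k b * kd l d - kd k d * kd l b)
      - kd j b * (kd k a * kd l d - kd k d * kd l a)
      + kd j d * (kd k a * kd l b - kd k b * kd l a))
  - kd i d * (kd j a * (kd k b * kd l c - kd k c * kd l b)
      - kd j b * (kd k a * kd l c - kd k c * kd l a)
      + kd j c * (kd k a * kd l b - kd k b * kd l a)) := by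
  simp [quadForm, Matrix.det_succ_row_zero, Fin.sum_univ_succ, Fin.succAbove]
  ring

lemma ite_ite_zero_eq_kd_mul (i j c d : Fin 7) (x : ℝ) :
    (if j = d then if i = c then x else 0 else 0) = kd i c * kd j d * x := by
  simp only [kd]
  split_ifs <;> simp

lemma sum_mul_tripleForm (a b c i j : Fin 7) (w : E7) :
    ∑ p, w p * tripleForm a b c p i j =
      w a * (kd i b * kd j c - kd i c * kd j b)
    - w b * (kd i a * kd j c - kd i c * kd j a)
    + w c * (kd i a * kd j b - kd i b * kd j a) := by
  simp only [tripleForm, mul_add, mul_sub, Finset.sum_add_distrib, Finset.sum_sub_distrib]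
  simp [kd, mul_ite, Finset.sum_ite_eq']

-- Laplace expansion of the determinant `quadForm` along its first two rows.
lemma sum_sum_mul_quadForm (a b c d i j : Fin 7) (u v : E7) :
    ∑ p, ∑ q, u p * v q * quadForm a b c d p q i j =
      (u a * v b - u b * v a) * (kd i c * kd j d - kd i d * kd j c)
    - (u a * v c - u c * v a) * (kd i b * kd j d - kd i d * kd j b)
    + (u a * v d - u d * v a) * (kd i b * kd j c - kd i c * kd j b)
    + (u b * v c - u c * v b) * (kd i a * kd j d - kd i d * kd j a)
    - (u b * v d - u d * v b) * (kd i a * kd j c - kd i c * kd j a)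
    + (u c * v d - u d * v c) * (kd i a * kd j b - kd i b * kd j a) := by
  simp only [quadForm_eq, mul_add, mul_sub, Finset.sum_add_distrib, Finset.sum_sub_distrib]
  simp [kd, mul_ite, Finset.sum_ite_eq']
  simp only [ite_ite_zero_eq_kd_mul]
  ring

set_option maxHeartbeats 1000000 in
lemma contractPhi_crossE (u v : E7) : contractPhi (crossE u v) = wedgeM u v - PsiM u v := by
  ext i j
  fin_cases i <;> fin_cases j <;>
  · simp only [Matrix.sub_apply, PsiM, contractPhi, Matrix.of_apply, psi7, phi7, mul_add, mul_sub,
      Finset.sum_add_distrib, Finset.sum_sub_distrib, sum_sum_mul_quadForm, sum_mul_tripleForm]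
    rw [crossE_eq]
    simp [wedgeM, kd] <;> ring

lemma exists_mem_ne_zero_inner_eq_zero {E : Type*} [NormedAddCommGroup E]
    [InnerProductSpace ℝ E] [FiniteDimensional ℝ E] {S : Submodule ℝ E}
    (hS : 2 ≤ Module.finrank ℝ S) (u : E) : ∃ b ∈ S, b ≠ 0 ∧ ⟪u, b⟫ = 0 := by
  have hline : Module.finrank ℝ (ℝ ∙ u) ≤ 1 := by simpa using finrank_span_le_card ({u} : Set E)
  have hsum := Submodule.finrank_sup_add_finrank_inf_eq S (ℝ ∙ u)ᗮ
  have hortho := (ℝ ∙ u).finrank_add_finrank_orthogonal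
  have hsup := (S ⊔ (ℝ ∙ u)ᗮ).finrank_le
  have hinf : S ⊓ (ℝ ∙ u)ᗮ ≠ ⊥ := by
    rw [← Submodule.one_le_finrank_iff]
    omega
  obtain ⟨b, ⟨hbS, hbu⟩, hb⟩ := Submodule.exists_mem_ne_zero_of_ne_bot hinf
  exact ⟨b, hbS, hb, Submodule.mem_orthogonal_singleton_iff_inner_right.mp hbu⟩

lemma three_le_finrank_of_crossE_mem {S : Submodule ℝ E7} (hS : 2 ≤ Module.finrank ℝ S)
    (hcross : ∀ u ∈ S, ∀ v ∈ S, crossE u v ∈ S) : 3 ≤ Module.finrank ℝ S := by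
  obtain ⟨a, haS, ha⟩ := Submodule.exists_mem_ne_zero_of_ne_bot
    ((Submodule.one_le_finrank_iff (S := S)).mp (by omega))
  obtain ⟨b, hbS, hb, hab⟩ := exists_mem_ne_zero_inner_eq_zero hS a
  -- `b × (a × b) = ‖b‖² a` because `a ⊥ b`, so `a × b ≠ 0`.
  have hw : crossE a b ≠ 0 := by
    intro hw0
    have h := crossE_crossE_self b a
    rw [real_inner_comm a b, hab, zero_smul, sub_zero, hw0, crossE_zero_right] at h
    exact smul_ne_zero (inner_self_ne_zero.mpr hb) ha h.symm
  have hli : LinearIndependent ℝ ![a, b, crossE a b] := by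
    refine linearIndependent_of_ne_zero_of_inner_eq_zero ?_ ?_
    · intro i; fin_cases i <;> assumption
    · have hba : ⟪b, a⟫ = 0 := by rwa [real_inner_comm]
      have haw : ⟪a, crossE a b⟫ = 0 := by rw [real_inner_comm, inner_crossE_self_left]
      have hbw : ⟪b, crossE a b⟫ = 0 := by rw [real_inner_comm, inner_crossE_self_right]
      have hwa := inner_crossE_self_left a b
      have hwb := inner_crossE_self_right a b
      intro i j hij
      fin_cases i <;> fin_cases j <;> simp at hij ⊢ <;> assumption
  have hle : Submodule.span ℝ (Set.range ![a, b, crossE a b]) ≤ S := by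
    rw [Submodule.span_le, Set.range_subset_iff]
    intro i; fin_cases i
    exacts [haS, hbS, hcross a haS b hbS]
  simpa [finrank_span_eq_card hli] using Submodule.finrank_mono hle

lemma finrank_inf_le_one_of_isAssociative {P Q : Submodule ℝ E7} (hP : IsAssociative P)
    (hQ : IsAssociative Q) (hPQ : P ≠ Q) : Module.finrank ℝ ↥(P ⊓ Q) ≤ 1 := by
  by_contra! h
  have h3 : 3 ≤ Module.finrank ℝ ↥(P ⊓ Q) :=
    three_le_finrank_of_crossE_mem h fun u hu v hv =>
      ⟨hP.2 u hu.1 v hv.1, hQ.2 u hu.2 v hv.2⟩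
  have hinfP : P ⊓ Q = P := Submodule.eq_of_le_of_finrank_le inf_le_left (hP.1 ▸ h3)
  have hinfQ : P ⊓ Q = Q := Submodule.eq_of_le_of_finrank_le inf_le_right (hQ.1 ▸ h3)
  exact hPQ (hinfP.symm.trans hinfQ)

lemma sup_ne_top_of_isAssociative {P Q : Submodule ℝ E7} (hP : IsAssociative P)
    (hQ : IsAssociative Q) : P ⊔ Q ≠ ⊤ := by
  intro htop
  have h := Submodule.finrank_add_le_finrank_add_finrank P Q
  rw [htop, finrank_top, finrank_euclideanSpace_fin, hP.1, hQ.1] at h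
  omega

lemma eq_top_of_crossE_mem {V : Submodule ℝ E7} {d : E7} (hd : d ≠ 0) (hdV : d ∈ V)
    (hV : ∀ x, crossE d x ∈ V) : V = ⊤ := by
  refine eq_top_iff.mpr fun x _ => ?_
  have hx : x = ⟪d, d⟫⁻¹ • (crossE d (crossE x d) + ⟪d, x⟫ • d) := by
    rw [crossE_crossE_self, sub_add_cancel, smul_smul, inv_mul_cancel₀ (inner_self_ne_zero.mpr hd),
      one_smul]
  rw [hx]
  exact V.smul_mem _ (V.add_mem (hV _) (V.smul_mem _ hdV))

def contractPhiₗ : E7 →ₗ[ℝ] Matrix (Fin 7) (Fin 7) ℝ where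
  toFun := contractPhi
  map_add' u v := by
    ext i j
    simp [contractPhi, add_mul, Finset.sum_add_distrib]
  map_smul' c u := by
    ext i j
    simp [contractPhi, Finset.mul_sum, mul_assoc]

@[simp] lemma contractPhiₗ_apply (u : E7) : contractPhiₗ u = contractPhi u := rfl

def wedgeSpan (R : Submodule ℝ E7) : Submodule ℝ (Matrix (Fin 7) (Fin 7) ℝ) :=
  Submodule.span ℝ {M | ∃ a ∈ R, ∃ b ∈ R, M = wedgeM a b}

lemma mulVecE_eq_toEuclideanLin (X : Matrix (Fin 7) (Fin 7) ℝ) (x : E7) :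
    mulVecE X x = Matrix.toEuclideanLin X x := rfl

lemma mulVecE_wedgeM (a b x : E7) : mulVecE (wedgeM a b) x = ⟪b, x⟫ • a - ⟪a, x⟫ • b := by
  ext i
  simp only [mulVecE, wedgeM, real_inner_eq_sum, Matrix.of_apply, PiLp.toLp_apply, PiLp.sub_apply,
    PiLp.smul_apply, smul_eq_mul, sub_mul, Finset.sum_sub_distrib, Finset.sum_mul]
  congr 1 <;> exact Finset.sum_congr rfl fun j _ => by ring

lemma mulVecE_mem_of_mem_wedgeSpan {R : Submodule ℝ E7} {W : Matrix (Fin 7) (Fin 7) ℝ}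
    (hW : W ∈ wedgeSpan R) (x : E7) : mulVecE W x ∈ R := by
  induction hW using Submodule.span_induction with
  | mem M hM =>
    obtain ⟨a, ha, b, hb, rfl⟩ := hM
    rw [mulVecE_wedgeM]
    exact R.sub_mem (R.smul_mem _ ha) (R.smul_mem _ hb)
  | zero => simp [mulVecE_eq_toEuclideanLin]
  | add A B _ _ hA hB => simpa [mulVecE_eq_toEuclideanLin] using R.add_mem hA hB
  | smul c A _ hA => simpa [mulVecE_eq_toEuclideanLin] using R.smul_mem c hA

lemma transpose_eq_neg_of_mem_wedgeSpan {R : Submodule ℝ E7} {W : Matrix (Fin 7) (Fin 7) ℝ}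
    (hW : W ∈ wedgeSpan R) : Wᵀ = -W := by
  induction hW using Submodule.span_induction with
  | mem M hM =>
    obtain ⟨a, ha, b, hb, rfl⟩ := hM
    ext i j
    simp [wedgeM]
  | zero => simp
  | add A B _ _ hA hB => rw [Matrix.transpose_add, hA, hB, neg_add]
  | smul c A _ hA => rw [Matrix.transpose_smul, hA, smul_neg]

lemma eq_zero_of_transpose_eq_neg {R : Submodule ℝ E7} {W : Matrix (Fin 7) (Fin 7) ℝ}
    (hskew : Wᵀ = -W) (hR : Module.finrank ℝ R ≤ 1) (hW : ∀ x, mulVecE W x ∈ R) : W = 0 := by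
  obtain ⟨z, hz⟩ := finrank_le_one_iff.mp hR
  have hcol : ∀ j, ∃ c : ℝ, ∀ i, W i j = c * (z : E7) i := by
    intro j
    obtain ⟨c, hc⟩ := hz ⟨_, hW (EuclideanSpace.single j 1)⟩
    refine ⟨c, fun i => ?_⟩
    have := congrArg (fun v : R => (v : E7) i) hc
    simpa [mulVecE, PiLp.single_apply, eq_comm] using this
  choose c hc using hcol
  have hskew' : ∀ i j, W i j = -W j i := fun i j => by
    simpa using congrFun (congrFun hskew j) i
  -- `W i j = c j * z i = -(c i * z j)`, and `c i * z i = W i i = 0`.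
  ext i j
  by_cases hzi : (z : E7) i = 0
  · simp [hc, hzi]
  · have hci : c i = 0 := by
      have hii := hskew' i i
      rw [hc i i] at hii
      exact (mul_eq_zero.mp (by linarith : c i * (z : E7) i = 0)).resolve_right hzi
    rw [hskew' i j, hc i j, hci, zero_mul, neg_zero, Matrix.zero_apply]

lemma contractPhi_crossE_mem_Theta {R : Submodule ℝ E7} {a b : E7} (ha : a ∈ R) (hb : b ∈ R) :
    contractPhi (crossE a b) ∈ Theta R := by
  rw [contractPhi_crossE]
  exact sub_mem (Submodule.subset_span ⟨a, ha, b, hb, Or.inl rfl⟩)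
    (Submodule.subset_span ⟨a, ha, b, hb, Or.inr rfl⟩)

lemma contractPhi_mem_Theta {P : Submodule ℝ E7} (hP : IsAssociative P) {u : E7} (hu : u ∈ P) :
    contractPhi u ∈ Theta P := by
  obtain ⟨b, hbP, hb, hub⟩ := exists_mem_ne_zero_inner_eq_zero (by rw [hP.1]; norm_num) u
  have hu_eq : u = ⟪b, b⟫⁻¹ • crossE b (crossE u b) := by
    rw [crossE_crossE_self, real_inner_comm u b, hub, zero_smul, sub_zero, smul_smul,
      inv_mul_cancel₀ (inner_self_ne_zero.mpr hb), one_smul]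
  rw [hu_eq, ← contractPhiₗ_apply, map_smul]
  exact Submodule.smul_mem _ _ (contractPhi_crossE_mem_Theta hbP (hP.2 u hu b hbP))

lemma Theta_eq_wedgeSpan_sup {P : Submodule ℝ E7} (hP : IsAssociative P) :
    Theta P = wedgeSpan P ⊔ P.map contractPhiₗ := by
  apply le_antisymm
  · rw [Theta, Submodule.span_le]
    rintro M ⟨a, ha, b, hb, rfl | rfl⟩
    · exact Submodule.mem_sup_left (Submodule.subset_span ⟨a, ha, b, hb, rfl⟩)
    · rw [show PsiM a b = wedgeM a b - contractPhi (crossE a b) by rw [contractPhi_crossE]; abel]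
      exact sub_mem (Submodule.mem_sup_left (Submodule.subset_span ⟨a, ha, b, hb, rfl⟩))
        (Submodule.mem_sup_right ⟨crossE a b, hP.2 a ha b hb, rfl⟩)
  · refine sup_le ?_ ?_
    · rw [wedgeSpan, Submodule.span_le]
      rintro M ⟨a, ha, b, hb, rfl⟩
      exact Submodule.subset_span ⟨a, ha, b, hb, Or.inl rfl⟩
    · rintro M ⟨u, hu, rfl⟩
      exact contractPhi_mem_Theta hP hu

lemma eq_of_add_contractPhi_eq {P Q : Submodule ℝ E7} (hPQ : P ⊔ Q ≠ ⊤)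
    {W W' : Matrix (Fin 7) (Fin 7) ℝ} (hW : W ∈ wedgeSpan P) (hW' : W' ∈ wedgeSpan Q)
    {u u' : E7} (hu : u ∈ P) (hu' : u' ∈ Q) (h : W + contractPhi u = W' + contractPhi u') :
    u = u' := by
  by_contra hne
  refine hPQ (eq_top_of_crossE_mem (sub_ne_zero.mpr hne)
    (sub_mem (Submodule.mem_sup_left hu) (Submodule.mem_sup_right hu')) fun x => ?_)
  have hdiff : contractPhi (u - u') = W' - W := by
    rw [← contractPhiₗ_apply, map_sub, contractPhiₗ_apply, contractPhiₗ_apply,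
      sub_eq_sub_iff_add_eq_add, add_comm, h, add_comm]
  have hx : -crossE (u - u') x = mulVecE W' x - mulVecE W x := by
    rw [← mulVecE_contractPhi, hdiff]
    simp only [mulVecE_eq_toEuclideanLin, map_sub, LinearMap.sub_apply]
  rw [← neg_neg (crossE (u - u') x), hx]
  exact neg_mem (sub_mem (Submodule.mem_sup_right (mulVecE_mem_of_mem_wedgeSpan hW' x))
    (Submodule.mem_sup_left (mulVecE_mem_of_mem_wedgeSpan hW x)))

lemma Theta_inf_Theta {P Q : Submodule ℝ E7} (hP : IsAssociative P) (hQ : IsAssociative Q)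
    (hPQ : P ≠ Q) : Theta P ⊓ Theta Q = (P ⊓ Q).map contractPhiₗ := by
  refine le_antisymm ?_ ?_
  · intro M hM
    obtain ⟨hMP, hMQ⟩ := Submodule.mem_inf.mp hM
    rw [Theta_eq_wedgeSpan_sup hP, Submodule.mem_sup] at hMP
    rw [Theta_eq_wedgeSpan_sup hQ, Submodule.mem_sup] at hMQ
    obtain ⟨W, hW, _, ⟨u, hu, rfl⟩, rfl⟩ := hMP
    obtain ⟨W', hW', _, ⟨u', hu', rfl⟩, h⟩ := hMQ
    obtain rfl := eq_of_add_contractPhi_eq (sup_ne_top_of_isAssociative hP hQ) hW hW' hu hu' h.symm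
    obtain rfl : W = W' := add_right_cancel h.symm
    have hW0 : W = 0 := eq_zero_of_transpose_eq_neg (transpose_eq_neg_of_mem_wedgeSpan hW)
      (finrank_inf_le_one_of_isAssociative hP hQ hPQ) fun x =>
        ⟨mulVecE_mem_of_mem_wedgeSpan hW x, mulVecE_mem_of_mem_wedgeSpan hW' x⟩
    exact ⟨u, ⟨hu, hu'⟩, by simp [hW0]⟩
  · refine (Submodule.map_inf_le _).trans (inf_le_inf ?_ ?_)
    · exact (Theta_eq_wedgeSpan_sup hP).symm ▸ le_sup_right
    · exact (Theta_eq_wedgeSpan_sup hQ).symm ▸ le_sup_right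

/-- Theorem 4.14 / Corollary 4.13: for distinct associative 3-planes `P, Q`,
`Θ(P) ∩ Θ(Q) = (P ∩ Q) ⌟ φ`. -/
theorem stmt19 (P Q : Submodule ℝ E7) (hP : IsAssociative P) (hQ : IsAssociative Q)
    (hPQ : P ≠ Q) :
    (∀ M : Matrix (Fin 7) (Fin 7) ℝ, M ∈ Theta P ⊓ Theta Q ↔ ∃ u ∈ P ⊓ Q, M = contractPhi u) ∧
    (P ⊓ Q = ⊥ → Theta P ⊓ Theta Q = ⊥) ∧
    (∀ v : E7, v ≠ 0 → P ⊓ Q = Submodule.span ℝ {v} →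
      Theta P ⊓ Theta Q = Submodule.span ℝ {contractPhi v}) := by
  rw [Theta_inf_Theta hP hQ hPQ]
  refine ⟨fun M => ?_, fun h => ?_, fun v _ h => ?_⟩
  · simp [eq_comm]
  · rw [h, Submodule.map_bot]
  · rw [h, Submodule.map_span, Set.image_singleton, contractPhiₗ_apply]

end
end
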